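/- If γ + ρη < q/2, then for y, c, s as in Dilithium's rejection sampling (‖y‖_∞ ≤ γ, c ternary with weight ρ, ‖s‖_∞ ≤ η), computing z = y + c·s in Z_q[X]/(X^n+1) with centered representatives in (-q/2, q/2] yields the same result as computing it over Z[X]/(X^n+1), i.e., no modular reduction occurs. -/

import Mathlib

/-!
Reducing a polynomial of degree `< 2n` modulo `X ^ n + 1` replaces `X ^ (n + i)` by `-X ^ i`, so
the `i`-th coefficient of `z = y + c * s` is `y i + (c * s) i - (c * s) (n + i)`. Expanding over
the support of `c`, each `j` contributes `c j` times the difference of the coefficients `i` and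
`n + i` of `X ^ j * s`, and at most one of them is nonzero. Hence `|z i| ≤ γ + ρ η < q / 2`:
the integer coefficients of `z` are already the centered representatives.
-/

open Polynomial
open Finset

namespace Polynomial

variable {R : Type*}

section Reduction

variable [CommRing R] [Nontrivial R] {n : ℕ}

theorem modByMonic_X_pow_add_one_of_degree_lt (hn : n ≠ 0) {p : R[X]}
    (hp : p.degree < ↑(2 * n)) :
    p %ₘ (X ^ n + 1) = ∑ j ∈ range n, monomial j (p.coeff j - p.coeff (n + j)) := by
  have hmonic : (X ^ n + 1 : R[X]).Monic := by simpa using monic_X_pow_add_C (1 : R) hn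
  refine (div_modByMonic_unique (∑ j ∈ range n, monomial j (p.coeff (n + j))) _ hmonic
    ⟨?_, ?_⟩).2
  · ext m
    simp only [add_mul, one_mul, coeff_add, coeff_X_pow_mul', finsetSum_coeff, coeff_monomial,
      sum_ite_eq', mem_range]
    obtain hm | hm | hm : m < n ∨ n ≤ m ∧ m < 2 * n ∨ 2 * n ≤ m := by omega
    · simp [hm, show ¬n ≤ m by omega]
    · simp [hm.1, show ¬m < n by omega, show m - n < n by omega, Nat.add_sub_cancel' hm.1]
    · simp [coeff_eq_zero_of_degree_lt (hp.trans_le (by exact_mod_cast hm)),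
        show ¬m < n by omega, show ¬m - n < n by omega]
  · rw [← C_1, degree_X_pow_add_C (Nat.pos_of_ne_zero hn), degree_lt_iff_coeff_zero]
    intro m hm
    simp only [finsetSum_coeff, coeff_monomial, sum_ite_eq', mem_range]
    exact if_neg (by exact_mod_cast hm.not_gt)

theorem coeff_modByMonic_X_pow_add_one (hn : n ≠ 0) {p : R[X]} (hp : p.degree < ↑(2 * n))
    (i : ℕ) :
    (p %ₘ (X ^ n + 1)).coeff i = if i < n then p.coeff i - p.coeff (n + i) else 0 := by
  simp [modByMonic_X_pow_add_one_of_degree_lt hn hp, coeff_monomial, ite_sub_ite]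

end Reduction

theorem coeff_mul_eq_sum_support [Semiring R] (c s : R[X]) (m : ℕ) :
    (c * s).coeff m = ∑ j ∈ c.support, c.coeff j * (X ^ j * s).coeff m := by
  conv_lhs => rw [c.as_sum_support, sum_mul]
  simp only [finsetSum_coeff, ← C_mul_X_pow_eq_monomial, mul_assoc, coeff_C_mul]

theorem degree_add_mul_lt [Semiring R] {n : ℕ} {y c s : R[X]} (hy : y.degree < n)
    (hc : c.degree < n) (hs : s.degree < n) : (y + c * s).degree < ↑(2 * n) := by
  refine (degree_add_le _ _).trans_lt (max_lt (hy.trans_le (by exact_mod_cast by omega)) ?_)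
  calc (c * s).degree ≤ c.degree + s.degree := degree_mul_le _ _
    _ ≤ c.degree + n := by gcongr
    _ < n + n := WithBot.add_lt_add_right (WithBot.natCast_ne_bot n) hc
    _ = ↑(2 * n) := by push_cast; ring

section Bounds

variable [CommRing R] [LinearOrder R] [IsStrictOrderedRing R] {n : ℕ} {η : R}

/-- `X ^ j * s` is supported in `[j, j + n)`, which cannot contain both `i` and `n + i`. -/
theorem abs_coeff_X_pow_mul_sub_le {s : R[X]} (hs : s.degree < n) (hsb : ∀ k, |s.coeff k| ≤ η)
    (i j : ℕ) :
    |(X ^ j * s).coeff i - (X ^ j * s).coeff (n + i)| ≤ η := by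
  have hsz : ∀ k, n ≤ k → s.coeff k = 0 := fun k hk =>
    coeff_eq_zero_of_degree_lt (hs.trans_le (by exact_mod_cast hk))
  simp only [coeff_X_pow_mul']
  split_ifs with hji hjn hjn
  · rw [hsz (n + i - j) (by omega), sub_zero]; exact hsb _
  · omega
  · rw [zero_sub, abs_neg]; exact hsb _
  · simpa using (abs_nonneg _).trans (hsb 0)

theorem abs_coeff_mul_sub_coeff_mul_le {c s : R[X]} (hcb : ∀ j, |c.coeff j| ≤ 1)
    (hs : s.degree < n) (hsb : ∀ k, |s.coeff k| ≤ η) (i : ℕ) :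
    |(c * s).coeff i - (c * s).coeff (n + i)| ≤ #c.support * η := by
  rw [coeff_mul_eq_sum_support, coeff_mul_eq_sum_support, ← sum_sub_distrib]
  calc |∑ j ∈ c.support,
          (c.coeff j * (X ^ j * s).coeff i - c.coeff j * (X ^ j * s).coeff (n + i))|
      ≤ ∑ j ∈ c.support, |c.coeff j| * |(X ^ j * s).coeff i - (X ^ j * s).coeff (n + i)| := by
        simp_rw [← mul_sub, ← abs_mul]; exact abs_sum_le_sum_abs _ _
    _ ≤ ∑ j ∈ c.support, η := by
        gcongr with j
        exact mul_le_of_le_one_left (abs_nonneg _) (hcb j) |>.trans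
          (abs_coeff_X_pow_mul_sub_le hs hsb i j)
    _ = #c.support * η := by rw [sum_const, nsmul_eq_mul]

theorem abs_coeff_add_mul_modByMonic_le (hn : n ≠ 0) {y c s : R[X]} {γ : R}
    (hy : y.degree < n) (hc : c.degree < n) (hs : s.degree < n) (hyb : ∀ k, |y.coeff k| ≤ γ)
    (hcb : ∀ j, |c.coeff j| ≤ 1) (hsb : ∀ k, |s.coeff k| ≤ η) (i : ℕ) :
    |((y + c * s) %ₘ (X ^ n + 1)).coeff i| ≤ γ + #c.support * η := by
  have hγ : 0 ≤ γ := (abs_nonneg _).trans (hyb 0)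
  have hη : 0 ≤ η := (abs_nonneg _).trans (hsb 0)
  rw [coeff_modByMonic_X_pow_add_one hn (degree_add_mul_lt hy hc hs)]
  split_ifs with hi
  · have hyz : y.coeff (n + i) = 0 :=
      coeff_eq_zero_of_degree_lt (hy.trans_le (by exact_mod_cast by omega))
    rw [coeff_add, coeff_add, hyz, zero_add, add_sub_assoc]
    exact (abs_add_le _ _).trans
      (add_le_add (hyb i) (abs_coeff_mul_sub_coeff_mul_le hcb hs hsb i))
  · rw [abs_zero]; exact add_nonneg hγ (mul_nonneg (Nat.cast_nonneg _) hη)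

end Bounds

end Polynomial

theorem rejection_sample_no_reduction_general (n : ℕ) (hn : 1 ≤ n) (ρ : ℕ) (γ η : ℤ)
    (q : ℕ) (hbound : (γ : ℚ) + (ρ : ℚ) * (η : ℚ) < (q : ℚ) / 2)
    (y c s : Polynomial ℤ)
    (hy : y.degree < n) (hc : c.degree < n) (hs : s.degree < n)
    (hyb : ∀ i : ℕ, |y.coeff i| ≤ γ)
    (hcter : ∀ i : ℕ, c.coeff i = 0 ∨ c.coeff i = 1 ∨ c.coeff i = -1)
    (hcwt : c.support.card = ρ)
    (hsb : ∀ i : ℕ, |s.coeff i| ≤ η) :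
    ∀ i : ℕ,
      -(q : ℚ) / 2 < (((y + c * s) %ₘ (X ^ n + 1)).coeff i : ℚ) ∧
        (((y + c * s) %ₘ (X ^ n + 1)).coeff i : ℚ) ≤ (q : ℚ) / 2 := by
  intro i
  have hcb : ∀ j, |c.coeff j| ≤ 1 := fun j => by rcases hcter j with h | h | h <;> simp [h]
  have hz : |(((y + c * s) %ₘ (X ^ n + 1)).coeff i : ℚ)| ≤ γ + ρ * η := by
    have hz := abs_coeff_add_mul_modByMonic_le (by omega) hy hc hs hyb hcb hsb i
    rw [hcwt] at hz
    exact_mod_cast hz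
  obtain ⟨hlo, hhi⟩ := abs_lt.mp (hz.trans_lt hbound)
  exact ⟨by rwa [neg_div], hhi.le⟩

/-- If `γ + ρη < q/2`, then all coefficients of `z = y + c·s mod (X^n+1)`
computed over `ℤ` already lie in the centered interval `(-q/2, q/2]`, so
computing `z` in `ℤ_q[X]/(X^n+1)` with centered representatives yields the
same result: no modular reduction occurs. -/
theorem rejection_sample_no_reduction (n : ℕ) (hn : 1 ≤ n) (ρ : ℕ) (γ η : ℤ)
    (q : ℕ) (hq : 0 < q) (hbound : (γ : ℚ) + (ρ : ℚ) * (η : ℚ) < (q : ℚ) / 2)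
    (y c s : Polynomial ℤ)
    (hy : y.degree < n) (hc : c.degree < n) (hs : s.degree < n)
    (hyb : ∀ i : ℕ, |y.coeff i| ≤ γ)
    (hcter : ∀ i : ℕ, c.coeff i = 0 ∨ c.coeff i = 1 ∨ c.coeff i = -1)
    (hcwt : c.support.card = ρ)
    (hsb : ∀ i : ℕ, |s.coeff i| ≤ η) :
    ∀ i : ℕ,
      -(q : ℚ) / 2 < (((y + c * s) %ₘ (X ^ n + 1)).coeff i : ℚ) ∧
        (((y + c * s) %ₘ (X ^ n + 1)).coeff i : ℚ) ≤ (q : ℚ) / 2 :=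
  rejection_sample_no_reduction_general n hn ρ γ η q hbound y c s hy hc hs hyb hcter hcwt hsb
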